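/- Suppose R ⊂ ℚ satisfies the property ⋆_V (i.e., −S(L) ⊂ R ⊂ V and ∪_{v ∈ V \ R} π(Ψ(v)) = V \ R), and set Γ = V \ R and Λ = ψ(Γ). Then for every Hahn series g with support contained in Λ, there exists a Hahn series f with support contained in Γ such that L(f) = g. -/

import Mathlib

open Polynomial Finset

noncomputable def PL {K : Type*} [Field K] (ℓ n : ℕ) (a : ℕ → Polynomial K) : Finset (ℚ × ℚ) :=
  (Finset.range (n + 1)).biUnion fun i =>
    (a i).support.image fun j : ℕ => ((ℓ : ℚ) ^ i, (j : ℚ))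

noncomputable def PsiSet {K : Type*} [Field K] (ℓ n : ℕ) (a : ℕ → Polynomial K) (v : ℚ) :
    Finset ℚ :=
  (PL ℓ n a).image fun p => v * p.1 + p.2

noncomputable def psi {K : Type*} [Field K] (ℓ n : ℕ) (a : ℕ → Polynomial K) (v : ℚ) : ℚ :=
  ((PsiSet ℓ n a v).min).untopD 0

noncomputable def piF {K : Type*} [Field K] (ℓ n : ℕ) (a : ℕ → Polynomial K) (q : ℚ) : ℚ :=
  (((PL ℓ n a).image fun p => (q - p.2) / p.1).max).unbotD 0

def slopeSet {K : Type*} [Field K] (ℓ n : ℕ) (a : ℕ → Polynomial K) : Set ℚ :=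
  {μ | ∃ b : ℚ,
    (∃ p ∈ PL ℓ n a, ∃ q ∈ PL ℓ n a, p ≠ q ∧ p.2 - μ * p.1 = b ∧ q.2 - μ * q.1 = b) ∧
    ∀ p ∈ PL ℓ n a, b ≤ p.2 - μ * p.1}

noncomputable def scaleEmb (ℓ : ℕ) (hℓ : 2 ≤ ℓ) (i : ℕ) : ℚ ↪o ℚ :=
  (OrderIso.mulLeft₀ ((ℓ : ℚ) ^ i)
    (pow_pos (by exact_mod_cast Nat.lt_of_lt_of_le Nat.zero_lt_two hℓ) i)).toOrderEmbedding

noncomputable def mahlerOp {K : Type*} [Field K] (ℓ : ℕ) (hℓ : 2 ≤ ℓ) (n : ℕ)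
    (a : ℕ → Polynomial K) (f : HahnSeries ℚ K) : HahnSeries ℚ K :=
  ∑ i ∈ Finset.range (n + 1),
    (HahnSeries.ofPowerSeries ℚ K (a i : PowerSeries K)) *
      HahnSeries.embDomain (scaleEmb ℓ hℓ i) f

/-!
For `v ∈ Γ` the minimum `ψ(v)` of `v ℓ^i + j` over the exponents `(ℓ^i, j)` of `L` is attained
at a single exponent, since otherwise `-v` would be a slope of the Newton polygon and `v ∈ R`.
Hence the coefficient of `L(f)` at `ψ(v)` is a nonzero multiple of `f_v` plus terms involving only
`f_w` with `w < v`, and since `Γ` is well ordered these triangular equations can be solved by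
well-founded recursion. Any other exponent `q` of `L(f)` lies in `Ψ(w)` for some `w ∈ Γ`; then
`π(q) ∈ Γ` by stability of `Γ` and `q = ψ(π(q)) ∈ Λ`, so outside `Λ` both `L(f)` and `g` vanish.
-/

theorem WellFounded.exists_fixed_point {α β : Type*} [Nonempty β] {r : α → α → Prop}
    (hr : WellFounded r) (Φ : (α → β) → α → β)
    (hΦ : ∀ F G v, (∀ w, r w v → F w = G w) → Φ F v = Φ G v) : ∃ F, ∀ v, F v = Φ F v := by
  classical
  refine ⟨hr.fix fun v IH => Φ (fun w => if h : r w v then IH w h else Classical.arbitrary β) v,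
    fun v => ?_⟩
  rw [hr.fix_eq]
  exact hΦ _ _ v fun w hw => dif_pos hw

theorem HahnSeries.coeff_ofPowerSeries_polynomial_mul {Γ R : Type*} [Ring Γ] [PartialOrder Γ]
    [IsStrictOrderedRing Γ] [CommSemiring R] (p : R[X]) (h : HahnSeries Γ R) (q : Γ) :
    (HahnSeries.ofPowerSeries Γ R (p : PowerSeries R) * h).coeff q =
      ∑ j ∈ p.support, p.coeff j * h.coeff (q - j) := by
  conv_lhs => rw [p.as_sum_support_C_mul_X_pow, ← Polynomial.coeToPowerSeries.ringHom_apply,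
    map_sum]
  simp [Finset.sum_mul, HahnSeries.coeff_single_mul]

theorem coeff_embDomain_scaleEmb {R : Type*} [Zero R] (ℓ : ℕ) (hℓ : 2 ≤ ℓ) (i : ℕ)
    (f : HahnSeries ℚ R) (q : ℚ) :
    (HahnSeries.embDomain (scaleEmb ℓ hℓ i) f).coeff q = f.coeff (q / (ℓ : ℚ) ^ i) := by
  have hq : q = scaleEmb ℓ hℓ i (q / (ℓ : ℚ) ^ i) :=
    (mul_div_cancel₀ q (pow_ne_zero _ (by exact_mod_cast (by omega : ℓ ≠ 0)))).symm
  rw [hq, HahnSeries.embDomain_coeff, ← hq]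

/-- The pairs `(i, j)` with `z^j φ^i` occurring in `L = ∑ a_i φ^i`. -/
def mahlerTerms {R : Type*} [Semiring R] (n : ℕ) (a : ℕ → R[X]) : Finset (Σ _ : ℕ, ℕ) :=
  (range (n + 1)).sigma fun i => (a i).support

theorem coeff_mahlerOp {K : Type*} [Field K] (ℓ : ℕ) (hℓ : 2 ≤ ℓ) (n : ℕ) (a : ℕ → K[X])
    (f : HahnSeries ℚ K) (q : ℚ) :
    (mahlerOp ℓ hℓ n a f).coeff q =
      ∑ x ∈ mahlerTerms n a, (a x.1).coeff x.2 * f.coeff ((q - x.2) / (ℓ : ℚ) ^ x.1) := by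
  simp [mahlerOp, mahlerTerms, Finset.sum_sigma, HahnSeries.coeff_ofPowerSeries_polynomial_mul,
    coeff_embDomain_scaleEmb]

section NewtonPolygon

variable {K : Type*} [Field K] {ℓ n : ℕ} {a : ℕ → K[X]}

variable (ℓ n a) in
theorem PL_eq_image : PL ℓ n a = (mahlerTerms n a).image fun x => ((ℓ : ℚ) ^ x.1, (x.2 : ℚ)) := by
  ext p
  simp [PL, mahlerTerms, and_assoc]

theorem mem_PL_of_mem_mahlerTerms {x : Σ _ : ℕ, ℕ} (hx : x ∈ mahlerTerms n a) :
    ((ℓ : ℚ) ^ x.1, (x.2 : ℚ)) ∈ PL ℓ n a := by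
  rw [PL_eq_image]
  exact Finset.mem_image_of_mem _ hx

theorem pow_natCast_pair_injective (hℓ : 2 ≤ ℓ) :
    Function.Injective fun x : Σ _ : ℕ, ℕ => ((ℓ : ℚ) ^ x.1, (x.2 : ℚ)) := by
  rintro ⟨i, j⟩ ⟨i', j'⟩ h
  simp only [Prod.mk.injEq, Nat.cast_inj] at h
  obtain ⟨hi, rfl⟩ := h
  rw [pow_right_injective₀ (by positivity) (by exact_mod_cast (by omega : ℓ ≠ 1)) hi]

theorem fst_pos_of_mem_PL (hℓ : 2 ≤ ℓ) {p : ℚ × ℚ} (hp : p ∈ PL ℓ n a) : 0 < p.1 := by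
  rw [PL_eq_image, Finset.mem_image] at hp
  obtain ⟨x, -, rfl⟩ := hp
  exact pow_pos (by exact_mod_cast (by omega : 0 < ℓ)) _

theorem PL_nonempty (h0 : a 0 ≠ 0) : (PL ℓ n a).Nonempty := by
  obtain ⟨j, hj⟩ := Polynomial.support_nonempty.mpr h0
  rw [PL_eq_image, Finset.image_nonempty]
  exact ⟨⟨0, j⟩, Finset.mem_sigma.mpr ⟨Finset.mem_range.mpr n.succ_pos, hj⟩⟩

theorem psi_le {p : ℚ × ℚ} (hp : p ∈ PL ℓ n a) (v : ℚ) : psi ℓ n a v ≤ v * p.1 + p.2 := by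
  have hmem : v * p.1 + p.2 ∈ PsiSet ℓ n a v := Finset.mem_image_of_mem _ hp
  rw [psi, ← Finset.coe_min' ⟨_, hmem⟩, WithTop.untopD_coe]
  exact Finset.min'_le _ _ hmem

theorem exists_eq_psi (h0 : a 0 ≠ 0) (v : ℚ) : ∃ p ∈ PL ℓ n a, v * p.1 + p.2 = psi ℓ n a v := by
  have hne : (PsiSet ℓ n a v).Nonempty := (PL_nonempty h0).image _
  rw [psi, ← Finset.coe_min' hne, WithTop.untopD_coe]
  exact Finset.mem_image.mp (Finset.min'_mem _ hne)

theorem le_piF {p : ℚ × ℚ} (hp : p ∈ PL ℓ n a) (q : ℚ) : (q - p.2) / p.1 ≤ piF ℓ n a q := by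
  have hmem : (q - p.2) / p.1 ∈ (PL ℓ n a).image fun p => (q - p.2) / p.1 :=
    Finset.mem_image_of_mem _ hp
  rw [piF, ← Finset.coe_max' ⟨_, hmem⟩, WithBot.unbotD_coe]
  exact Finset.le_max' _ _ hmem

theorem exists_eq_piF (h0 : a 0 ≠ 0) (q : ℚ) :
    ∃ p ∈ PL ℓ n a, (q - p.2) / p.1 = piF ℓ n a q := by
  have hne : ((PL ℓ n a).image fun p => (q - p.2) / p.1).Nonempty := (PL_nonempty h0).image _
  rw [piF, ← Finset.coe_max' hne, WithBot.unbotD_coe]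
  exact Finset.mem_image.mp (Finset.max'_mem _ hne)

theorem psi_piF (hℓ : 2 ≤ ℓ) (h0 : a 0 ≠ 0) (q : ℚ) : psi ℓ n a (piF ℓ n a q) = q := by
  obtain ⟨p, hp, hpq⟩ := exists_eq_piF h0 q
  obtain ⟨p', hp', hp'q⟩ := exists_eq_psi h0 (piF ℓ n a q)
  have hq : piF ℓ n a q * p.1 + p.2 = q := by
    rw [← hpq, div_mul_cancel₀ _ (fst_pos_of_mem_PL hℓ hp).ne', sub_add_cancel]
  have hle := le_piF hp' q
  rw [div_le_iff₀ (fst_pos_of_mem_PL hℓ hp')] at hle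
  linarith [psi_le hp (piF ℓ n a q)]

theorem eq_of_eq_psi {v : ℚ} (hv : -v ∉ slopeSet ℓ n a) {p p' : ℚ × ℚ} (hp : p ∈ PL ℓ n a)
    (hp' : p' ∈ PL ℓ n a) (hpv : v * p.1 + p.2 = psi ℓ n a v)
    (hp'v : v * p'.1 + p'.2 = psi ℓ n a v) : p = p' := by
  by_contra hne
  refine hv ⟨psi ℓ n a v, ⟨p, hp, p', hp', hne, by linarith, by linarith⟩, fun r hr => ?_⟩
  linarith [psi_le hr v]

theorem mem_psi_image_of_mem_PsiSet (hℓ : 2 ≤ ℓ) (h0 : a 0 ≠ 0) {Γ : Set ℚ}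
    (hclosed : (⋃ v ∈ Γ, ((PsiSet ℓ n a v).image (piF ℓ n a) : Set ℚ)) ⊆ Γ) {w q : ℚ}
    (hw : w ∈ Γ) (hq : q ∈ PsiSet ℓ n a w) : q ∈ psi ℓ n a '' Γ :=
  ⟨piF ℓ n a q, hclosed (Set.mem_biUnion hw (by simpa using Finset.mem_image_of_mem _ hq)),
    psi_piF hℓ h0 q⟩

end NewtonPolygon

section Solution

variable {K : Type*} [Field K] {ℓ n : ℕ} {a : ℕ → K[X]}

variable (ℓ n a) in
noncomputable def initialCoeff (v : ℚ) : K :=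
  ∑ x ∈ (mahlerTerms n a).filter (fun x => v * (ℓ : ℚ) ^ x.1 + x.2 = psi ℓ n a v),
    (a x.1).coeff x.2

open Classical in
variable (ℓ n a) in
noncomputable def lowerSum (Γ : Set ℚ) (F : ℚ → K) (v : ℚ) : K :=
  ∑ x ∈ mahlerTerms n a,
    if (psi ℓ n a v - x.2) / (ℓ : ℚ) ^ x.1 ∈ Γ ∧ (psi ℓ n a v - x.2) / (ℓ : ℚ) ^ x.1 < v then
      (a x.1).coeff x.2 * F ((psi ℓ n a v - x.2) / (ℓ : ℚ) ^ x.1)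
    else 0

theorem initialCoeff_ne_zero (hℓ : 2 ≤ ℓ) (h0 : a 0 ≠ 0) {v : ℚ} (hv : -v ∉ slopeSet ℓ n a) :
    initialCoeff ℓ n a v ≠ 0 := by
  obtain ⟨p, hp, hpv⟩ := exists_eq_psi h0 v
  rw [PL_eq_image, Finset.mem_image] at hp
  obtain ⟨x, hx, rfl⟩ := hp
  rw [initialCoeff, Finset.sum_eq_single_of_mem x (Finset.mem_filter.mpr ⟨hx, hpv⟩)]
  · exact Polynomial.mem_support_iff.mp (Finset.mem_sigma.mp hx).2
  · intro y hy hyx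
    rw [Finset.mem_filter] at hy
    exact absurd (pow_natCast_pair_injective hℓ (eq_of_eq_psi hv (mem_PL_of_mem_mahlerTerms hy.1)
      (mem_PL_of_mem_mahlerTerms hx) hy.2 hpv)) hyx

theorem sum_mahlerTerms_psi_eq_initialCoeff_add_lowerSum (hℓ : 2 ≤ ℓ) {Γ : Set ℚ} {F : ℚ → K}
    (hF : Function.support F ⊆ Γ) (v : ℚ) :
    ∑ x ∈ mahlerTerms n a, (a x.1).coeff x.2 * F ((psi ℓ n a v - x.2) / (ℓ : ℚ) ^ x.1) =
      initialCoeff ℓ n a v * F v + lowerSum ℓ n a Γ F v := by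
  rw [initialCoeff, lowerSum, Finset.sum_mul, Finset.sum_filter, ← Finset.sum_add_distrib]
  refine Finset.sum_congr rfl fun x hx => ?_
  have hpos : (0 : ℚ) < (ℓ : ℚ) ^ x.1 := pow_pos (by exact_mod_cast (by omega : 0 < ℓ)) _
  have hiff : (psi ℓ n a v - x.2) / (ℓ : ℚ) ^ x.1 = v ↔ v * (ℓ : ℚ) ^ x.1 + x.2 = psi ℓ n a v := by
    rw [div_eq_iff hpos.ne', sub_eq_iff_eq_add, eq_comm]
  have hle : (psi ℓ n a v - x.2) / (ℓ : ℚ) ^ x.1 ≤ v := by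
    rw [div_le_iff₀ hpos, sub_le_iff_le_add]
    exact psi_le (mem_PL_of_mem_mahlerTerms hx) v
  rcases hle.eq_or_lt with heq | hlt
  · simp [heq, hiff.mp heq]
  · rw [if_neg (hiff.not.mp hlt.ne), zero_add]
    by_cases hw : (psi ℓ n a v - x.2) / (ℓ : ℚ) ^ x.1 ∈ Γ
    · simp [hw, hlt]
    · simp [hw, Function.notMem_support.mp (mt (@hF _) hw)]

theorem exists_mahlerOp_eq (hℓ : 2 ≤ ℓ) (h0 : a 0 ≠ 0) {Γ : Set ℚ} (hΓ : Γ.IsWF)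
    (hslope : Disjoint (Neg.neg '' slopeSet ℓ n a) Γ)
    (hclosed : (⋃ v ∈ Γ, ((PsiSet ℓ n a v).image (piF ℓ n a) : Set ℚ)) ⊆ Γ)
    {g : HahnSeries ℚ K} (hg : g.support ⊆ psi ℓ n a '' Γ) :
    ∃ f : HahnSeries ℚ K, f.support ⊆ Γ ∧ mahlerOp ℓ hℓ n a f = g := by
  classical
  obtain ⟨F, hF⟩ := (Set.wellFoundedOn_iff.mp hΓ).exists_fixed_point
    (fun F v => if v ∈ Γ then
      (g.coeff (psi ℓ n a v) - lowerSum ℓ n a Γ F v) / initialCoeff ℓ n a v else 0)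
    (fun F G v hFG => by
      by_cases hv : v ∈ Γ
      · simp only [if_pos hv, lowerSum]
        congr 2
        refine Finset.sum_congr rfl fun x _ => ?_
        split_ifs with h
        · rw [hFG _ ⟨h.2, h.1, hv⟩]
        · rfl
      · simp only [if_neg hv])
  have hFΓ : Function.support F ⊆ Γ := fun v hv => by_contra fun h => hv (by rw [hF, if_neg h])
  refine ⟨⟨F, (hΓ.mono hFΓ).isPWO⟩, hFΓ, HahnSeries.ext (funext fun q => ?_)⟩
  rw [coeff_mahlerOp]
  by_cases hq : q ∈ psi ℓ n a '' Γ
  · obtain ⟨v, hv, rfl⟩ := hq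
    have hv' : -v ∉ slopeSet ℓ n a := fun h => hslope.ne_of_mem ⟨-v, h, neg_neg v⟩ hv rfl
    rw [sum_mahlerTerms_psi_eq_initialCoeff_add_lowerSum hℓ hFΓ, hF v, if_pos hv,
      mul_div_cancel₀ _ (initialCoeff_ne_zero hℓ h0 hv'), sub_add_cancel]
  · rw [not_not.mp (mt (g.mem_support q).mpr (mt (@hg q) hq))]
    refine Finset.sum_eq_zero fun x hx => mul_eq_zero_of_right _ ?_
    by_contra hne
    have hpos : (ℓ : ℚ) ^ x.1 ≠ 0 := pow_ne_zero _ (by exact_mod_cast (by omega : ℓ ≠ 0))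
    refine hq (mem_psi_image_of_mem_PsiSet hℓ h0 hclosed (hFΓ hne)
      (Finset.mem_image.mpr ⟨_, mem_PL_of_mem_mahlerTerms hx, ?_⟩))
    rw [div_mul_cancel₀ _ hpos, sub_add_cancel]

end Solution

theorem stmt17_general {K : Type*} [Field K] (ℓ n : ℕ) (hℓ : 2 ≤ ℓ) (a : ℕ → Polynomial K)
    (h0 : a 0 ≠ 0) (V : Set ℚ)
    (hwf : V.IsWF)
    (R : Set ℚ) (hR1 : Neg.neg '' slopeSet ℓ n a ⊆ R)
    (hR3 : (⋃ v ∈ V \ R, ((PsiSet ℓ n a v).image (piF ℓ n a) : Set ℚ)) = V \ R)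
    (g : HahnSeries ℚ K) (hg : g.support ⊆ psi ℓ n a '' (V \ R)) :
    ∃ f : HahnSeries ℚ K, f.support ⊆ V \ R ∧ mahlerOp ℓ hℓ n a f = g :=
  exists_mahlerOp_eq hℓ h0 (hwf.mono Set.sdiff_subset)
    (Set.disjoint_sdiff_right.mono_left hR1) hR3.subset hg

theorem stmt17 {K : Type*} [Field K] (ℓ n : ℕ) (hℓ : 2 ≤ ℓ) (a : ℕ → Polynomial K)
    (h0 : a 0 ≠ 0) (hn : a n ≠ 0) (V : Set ℚ)
    (hsolV : ∀ f : HahnSeries ℚ K, mahlerOp ℓ hℓ n a f = 0 → f.support ⊆ V)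
    (hwf : V.IsWF)
    (hslV : Neg.neg '' slopeSet ℓ n a ⊆ V)
    (hstab : (⋃ v ∈ V, ((PsiSet ℓ n a v).image (piF ℓ n a) : Set ℚ)) = V)
    (R : Set ℚ) (hR1 : Neg.neg '' slopeSet ℓ n a ⊆ R) (hR2 : R ⊆ V)
    (hR3 : (⋃ v ∈ V \ R, ((PsiSet ℓ n a v).image (piF ℓ n a) : Set ℚ)) = V \ R)
    (g : HahnSeries ℚ K) (hg : g.support ⊆ psi ℓ n a '' (V \ R)) :
    ∃ f : HahnSeries ℚ K, f.support ⊆ V \ R ∧ mahlerOp ℓ hℓ n a f = g :=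
  stmt17_general ℓ n hℓ a h0 V hwf R hR1 hR3 g hg
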